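/- Let (R,m) be an F-rational Cohen–Macaulay Noetherian local ring of characteristic p > 0, and let q₁ ⊆ q₂ be ideals each generated by a system of parameters of the same length t. Then (q₁q₂)^* = q₁q₂. -/

import Mathlib

/-!
Definitions of characteristic-`p` notions (Frobenius powers, Frobenius/tight closure,
parameter ideals, F-rationality, F-injectivity, excellence, ...) used to state results
of "A characterization of F-rationality" (products of parameter ideals & tight closure).
-/

open IsLocalRing

universe u

section BasicDefs

variable (A : Type u) [CommRing A] (p : ℕ)

/-- The Frobenius power `I^[q]` of an ideal: the ideal generated by `q`-th powers
of elements of `I`. -/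
def fpow (I : Ideal A) (q : ℕ) : Ideal A :=
  Ideal.span ((fun x => x ^ q) '' (I : Set A))

/-- `A°`: the complement of the union of the minimal primes of `A`. -/
def rcirc : Set A := {c | ∀ P ∈ minimalPrimes A, c ∉ P}

/-- The Frobenius closure `I^F` of an ideal `I` in a ring of characteristic `p`:
elements `x` with `x^(p^e) ∈ I^[p^e]` for all `e ≫ 0`.  (In characteristic `p` the
defining set is already an ideal, so taking the span is harmless.) -/
def fcl (I : Ideal A) : Ideal A :=
  Ideal.span {x | ∃ N, ∀ e ≥ N, x ^ p ^ e ∈ fpow A I (p ^ e)}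

/-- The tight closure `I^*` of an ideal `I` in a ring of characteristic `p`:
elements `x` such that `c * x^(p^e) ∈ I^[p^e]` for some `c ∈ A°` and all `e ≫ 0`. -/
def tcl (I : Ideal A) : Ideal A :=
  Ideal.span {x | ∃ c ∈ rcirc A, ∃ N, ∀ e ≥ N, c * x ^ p ^ e ∈ fpow A I (p ^ e)}

/-- The integral closure of an ideal: elements `x` satisfying an equation
`x^n + a₁ x^(n-1) + ⋯ + a_n = 0` with `aᵢ ∈ Iⁱ`. -/
def icl (I : Ideal A) : Set A :=
  {x | ∃ n : ℕ, 0 < n ∧ ∃ a : ℕ → A, (∀ i, 1 ≤ i → i ≤ n → a i ∈ I ^ i) ∧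
    x ^ n + ∑ i ∈ Finset.Icc 1 n, a i * x ^ (n - i) = 0}

/-- A filter regular element: `(0 :_A x)` has finite length. -/
def IsFilterRegular (x : A) : Prop :=
  IsFiniteLength A ((⊥ : Submodule A A).colon (Ideal.span {x}))

/-- A filter regular sequence: each `x i` is filter regular modulo its predecessors. -/
def IsFilterRegularSeq {t : ℕ} (x : Fin t → A) : Prop :=
  ∀ i : Fin t,
    IsFilterRegular (A ⧸ Ideal.span (x '' {j | j < i}))
      (Ideal.Quotient.mk (Ideal.span (x '' {j | j < i})) (x i))

/-- An equidimensional ring: `dim A/P = dim A` for every minimal prime `P`. -/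
def IsEquidim : Prop :=
  ∀ P ∈ minimalPrimes A, ringKrullDim (A ⧸ P) = ringKrullDim A

/-- A test element: `c ∈ A°` with `c · I^* ⊆ I` for every ideal `I`. -/
def HasTestElement : Prop :=
  ∃ c ∈ rcirc A, ∀ I : Ideal A, ∀ x ∈ tcl A p I, c * x ∈ I

end BasicDefs

section LocalDefs

variable (A : Type u) [CommRing A] [IsLocalRing A] (p : ℕ)

/-- A (possibly partial) system of parameters of a local ring. -/
def IsSOP {t : ℕ} (x : Fin t → A) : Prop :=
  (∀ i, x i ∈ maximalIdeal A) ∧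
    ringKrullDim (A ⧸ Ideal.span (Set.range x)) + (t : WithBot ℕ∞) = ringKrullDim A

/-- A full system of parameters of a local ring. -/
def IsFullSOP {t : ℕ} (x : Fin t → A) : Prop :=
  IsSOP A x ∧ (t : WithBot (WithTop ℕ)) = ringKrullDim A

/-- A parameter ideal: an ideal generated by a (possibly partial) system of parameters. -/
def IsParamIdeal (q : Ideal A) : Prop :=
  ∃ (t : ℕ) (x : Fin t → A), IsSOP A x ∧ q = Ideal.span (Set.range x)

/-- An ideal generated by a full system of parameters. -/
def IsFullParamIdeal (q : Ideal A) : Prop :=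
  ∃ (t : ℕ) (x : Fin t → A), IsFullSOP A x ∧ q = Ideal.span (Set.range x)

/-- F-rationality: every parameter ideal is tightly closed. -/
def FRational : Prop :=
  ∀ q : Ideal A, IsParamIdeal A q → tcl A p q = q

/-- Weak F-regularity: every ideal is tightly closed. -/
def WeaklyFRegular : Prop := ∀ I : Ideal A, tcl A p I = I

/-- The parameter test ideal `τ_par(A) = ⋂_q (q : q^*)`. -/
noncomputable def paramTestIdeal : Ideal A :=
  ⨅ (q : Ideal A) (_ : IsParamIdeal A q), Submodule.colon q (tcl A p q)

/-- F-rationality on the punctured spectrum. -/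
def FRationalOnPunctured : Prop :=
  ∀ (P : Ideal A) [P.IsPrime], P ≠ maximalIdeal A →
    FRational (Localization.AtPrime P) p

/-- Cohen–Macaulay local ring: every full system of parameters is a regular sequence. -/
def IsCMLocal : Prop :=
  ∀ (t : ℕ) (x : Fin t → A), IsFullSOP A x →
    RingTheory.Sequence.IsRegular A (List.ofFn x)

/-- An `m`-primary ideal of a local ring. -/
def IsMPrimary (q : Ideal A) : Prop := q.radical = maximalIdeal A

end LocalDefs

section FInj

variable (A : Type u) [CommRing A] (p : ℕ) [ExpChar A p]

/-- `A` viewed as a module over itself by restriction of scalars along the Frobenius. -/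
def FrobTwist (_p : ℕ) : Type u := A

instance : AddCommGroup (FrobTwist A p) := inferInstanceAs (AddCommGroup A)

noncomputable instance : Module A (FrobTwist A p) := Module.compHom A (frobenius A p)

/-- The Frobenius `x ↦ x^p`, as an `A`-linear map `A → F_* A`. -/
noncomputable def frobHom : A →ₗ[A] FrobTwist A p where
  toFun x := x ^ p
  map_add' x y := add_pow_expChar x y p
  map_smul' r x := by
    show (r * x) ^ p = frobenius A p r * x ^ p
    rw [frobenius_def, mul_pow]

/-- F-injectivity: the map induced by the Frobenius on each local cohomology module
`H^i_m(A)` is injective. -/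
noncomputable def FInjective [IsLocalRing A] : Prop :=
  ∀ i : ℕ, Function.Injective
    ((localCohomology (maximalIdeal A) i).map
      (ModuleCat.ofHom (frobHom A p) :
        ModuleCat.of A A ⟶ ModuleCat.of A (FrobTwist A p)))

end FInj

section Excellence

variable (B : Type u) [CommRing B]

/-- A regular local ring: Noetherian, and the maximal ideal is generated by
`dim B` elements. -/
def IsRegularLocal [IsLocalRing B] : Prop :=
  IsNoetherianRing B ∧ ∃ (t : ℕ) (x : Fin t → B),
    maximalIdeal B = Ideal.span (Set.range x) ∧
      (t : WithBot (WithTop ℕ)) = ringKrullDim B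

/-- A regular ring: all localizations at primes are regular local rings. -/
def IsRegularRing' : Prop :=
  ∀ (P : Ideal B) [P.IsPrime], IsRegularLocal (Localization.AtPrime P)

/-- A saturated chain of primes. -/
def IsSaturatedChain {n : ℕ} (c : Fin (n + 1) → Ideal B) : Prop :=
  StrictMono c ∧ (∀ i, (c i).IsPrime) ∧
    ∀ i : Fin n, ¬∃ r : Ideal B, r.IsPrime ∧ c i.castSucc < r ∧ r < c i.succ

/-- A catenary ring: any two saturated chains of primes with the same endpoints
have the same length. -/
def IsCatenary : Prop :=
  ∀ (P Q : Ideal B), P.IsPrime → Q.IsPrime → P ≤ Q →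
    ∀ (n m : ℕ) (c : Fin (n + 1) → Ideal B) (d : Fin (m + 1) → Ideal B),
      IsSaturatedChain B c → IsSaturatedChain B d →
      c 0 = P → c (Fin.last n) = Q → d 0 = P → d (Fin.last m) = Q → n = m

/-- Universally catenary: every finitely generated `B`-algebra
(i.e. quotient of a polynomial ring over `B`) is catenary. -/
def IsUniversallyCatenary : Prop :=
  ∀ (n : ℕ) (I : Ideal (MvPolynomial (Fin n) B)),
    IsCatenary (MvPolynomial (Fin n) B ⧸ I)

/-- J-2: the regular locus of every finitely generated `B`-algebra is open. -/
def IsJ2 : Prop :=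
  ∀ (n : ℕ) (I : Ideal (MvPolynomial (Fin n) B)),
    IsOpen {P : PrimeSpectrum (MvPolynomial (Fin n) B ⧸ I) |
      IsRegularLocal (Localization.AtPrime P.asIdeal)}

/-- The G-ring (geometrically regular formal fibers) condition for a Noetherian local
ring, via the classical characterization: for every module-finite `B`-algebra `C`
which is a local domain, the generic formal fiber of `C` is regular. -/
def IsGLocal [IsLocalRing B] : Prop :=
  ∀ (C : Type u) [CommRing C] [Algebra B C] [IsLocalRing C] [IsDomain C],
    Module.Finite B C →
      IsRegularRing' (Localization
        (Submonoid.map (algebraMap C (AdicCompletion (maximalIdeal C) C))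
          (nonZeroDivisors C)))

/-- An excellent local ring: Noetherian, geometrically regular formal fibers (G-ring),
J-2, and universally catenary. -/
def IsExcellentLocal [IsLocalRing B] : Prop :=
  IsNoetherianRing B ∧ IsGLocal B ∧ IsJ2 B ∧ IsUniversallyCatenary B

/-- A Cohen–Macaulay ring: all localizations at primes are Cohen–Macaulay local rings. -/
def IsCMRing : Prop :=
  ∀ (P : Ideal B) [P.IsPrime], IsCMLocal (Localization.AtPrime P)

/-- A homomorphic image of a (Noetherian) Cohen–Macaulay ring. -/
def IsHomImageOfCM : Prop :=
  ∃ (S : Type u) (_ : CommRing S) (f : S →+* B),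
    Function.Surjective f ∧ IsNoetherianRing S ∧ IsCMRing S

/-- Locally equidimensional: all localizations at primes are equidimensional. -/
def IsLocallyEquidim : Prop :=
  ∀ (P : Ideal B) [P.IsPrime], IsEquidim (Localization.AtPrime P)

/-- Permutable parameters: for every permutation, the ideal generated by each initial
segment is proper and all of its minimal primes have height equal to the length of
the segment. -/
def ArePermutableParameters {t : ℕ} (x : Fin t → B) : Prop :=
  ∀ (σ : Equiv.Perm (Fin t)) (i : ℕ), i ≤ t →
    Ideal.span ((fun j => x (σ j)) '' {j : Fin t | (j : ℕ) < i}) ≠ ⊤ ∧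
    ∀ (P : Ideal B) [P.IsPrime],
      P ∈ (Ideal.span ((fun j => x (σ j)) '' {j : Fin t | (j : ℕ) < i})).minimalPrimes →
        ringKrullDim (Localization.AtPrime P) = (i : WithBot (WithTop ℕ))

/-- An ideal generated by monomials in the elements `x i`. -/
def GeneratedByMonomialsIn {t : ℕ} (x : Fin t → B) (J : Ideal B) : Prop :=
  ∃ s : Finset (Fin t → ℕ),
    J = Ideal.span ((fun a : Fin t → ℕ => ∏ i, x i ^ a i) '' (s : Set (Fin t → ℕ)))

end Excellence

section Monomial

variable (p t : ℕ)

/-- An irreducible monomial ideal: generated by pure powers of a subset of the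
variables. -/
def IsPurePowerIdeal (I : Ideal (MvPolynomial (Fin t) (ZMod p))) : Prop :=
  ∃ (S : Finset (Fin t)) (a : Fin t → ℕ), (∀ i ∈ S, 1 ≤ a i) ∧
    I = Ideal.span ((fun i => MvPolynomial.X i ^ a i) '' (S : Set (Fin t)))

/-- A monomial ideal of the polynomial ring. -/
def IsMonomialIdeal (I : Ideal (MvPolynomial (Fin t) (ZMod p))) : Prop :=
  ∃ s : Set (Fin t → ℕ),
    I = Ideal.span ((fun a : Fin t → ℕ => ∏ i, MvPolynomial.X i ^ a i) '' s)

end Monomial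

/-!
Since `q₁q₂ ⊆ q₁` and `q₁` is tightly closed, an element `α ∈ (q₁q₂)^*` can be written
`α = ∑ aᵢ xᵢ`. For `q = p^e` the relation `c α^q ∈ (q₁q₂)^[q] ⊆ q₂^[q] (x₁^q, …, x_t^q)` reads
`∑ (c aᵢ^q) xᵢ^q ∈ q₂^[q] (x₁^q, …, x_t^q)`. The powers `xᵢ^q` still form a system of parameters,
which extends to a full one and is therefore a regular sequence, and modulo a regular sequence
contained in an ideal `J` such a relation forces every coefficient into `J`. Hence
`c aᵢ^q ∈ q₂^[q]` for all large `e`, i.e. `aᵢ ∈ q₂^* = q₂`, and `α ∈ q₁q₂`.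
-/

section FrobeniusPower

variable {A : Type*} [CommRing A]

theorem pow_mem_fpow {I : Ideal A} {a : A} (ha : a ∈ I) (q : ℕ) : a ^ q ∈ fpow A I q :=
  Ideal.subset_span ⟨a, ha, rfl⟩

theorem fpow_mono {I J : Ideal A} (h : I ≤ J) (q : ℕ) : fpow A I q ≤ fpow A J q :=
  Ideal.span_mono (Set.image_mono h)

variable {p : ℕ} [ExpChar A p]

theorem fpow_span (S : Set A) (e : ℕ) :
    fpow A (Ideal.span S) (p ^ e) = Ideal.span ((· ^ p ^ e) '' S) := by
  refine le_antisymm (Ideal.span_le.mpr ?_) (Ideal.span_mono (Set.image_mono Ideal.subset_span))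
  rintro _ ⟨a, ha, rfl⟩
  beta_reduce
  induction ha using Submodule.span_induction with
  | mem s hs => exact Ideal.subset_span ⟨s, hs, rfl⟩
  | zero => simp [zero_pow (pow_ne_zero e (expChar_pos A p).ne')]
  | add a b _ _ ha hb => rw [add_pow_expChar_pow]; exact add_mem ha hb
  | smul r a _ ha => rw [smul_eq_mul, mul_pow]; exact Ideal.mul_mem_left _ _ ha

theorem fpow_mul_le (I J : Ideal A) (e : ℕ) :
    fpow A (I * J) (p ^ e) ≤ fpow A I (p ^ e) * fpow A J (p ^ e) := by
  refine Ideal.span_le.mpr ?_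
  rintro _ ⟨a, ha, rfl⟩
  beta_reduce
  refine Submodule.mul_induction_on ha (fun a ha b hb => ?_) (fun a b ha hb => ?_)
  · rw [mul_pow]; exact Ideal.mul_mem_mul (pow_mem_fpow ha _) (pow_mem_fpow hb _)
  · rw [add_pow_expChar_pow]; exact add_mem ha hb

end FrobeniusPower

section TightClosure

variable (A : Type*) [CommRing A] (p : ℕ)

theorem one_mem_rcirc : (1 : A) ∈ rcirc A :=
  fun _ hP h => hP.1.1.ne_top (Ideal.eq_top_of_isUnit_mem _ h isUnit_one)

theorem le_tcl (I : Ideal A) : I ≤ tcl A p I := fun a ha =>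
  Ideal.subset_span ⟨1, one_mem_rcirc A, 0, fun e _ => by rw [one_mul]; exact pow_mem_fpow ha _⟩

variable {A p}

theorem tcl_mono {I J : Ideal A} (h : I ≤ J) : tcl A p I ≤ tcl A p J :=
  Ideal.span_mono fun _ ⟨c, hc, N, hN⟩ => ⟨c, hc, N, fun e he => fpow_mono h _ (hN e he)⟩

end TightClosure

section RegularSequence

open RingTheory.Sequence

variable {A : Type*} [CommRing A]

theorem Ideal.ofList_ofFn {n : ℕ} (v : Fin n → A) :
    Ideal.ofList (List.ofFn v) = Ideal.span (Set.range v) :=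
  congrArg Ideal.span (Set.ext fun a => List.mem_ofFn' v a)

namespace RingTheory.Sequence.IsWeaklyRegular

theorem of_ofFn_append {m n : ℕ} {u : Fin m → A} {z : Fin n → A}
    (h : IsWeaklyRegular A (List.ofFn (Fin.append u z))) : IsWeaklyRegular A (List.ofFn u) := by
  rw [List.ofFn_fin_append, isWeaklyRegular_append_iff] at h
  exact h.1

theorem of_ofFn_succ {n : ℕ} {v : Fin (n + 1) → A} (h : IsWeaklyRegular A (List.ofFn v)) :
    IsWeaklyRegular A (List.ofFn (Fin.init v)) ∧
      ∀ a, v (Fin.last n) * a ∈ Ideal.span (Set.range (Fin.init v)) →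
        a ∈ Ideal.span (Set.range (Fin.init v)) := by
  rw [List.ofFn_succ', List.concat_eq_append, isWeaklyRegular_append_iff,
    isWeaklyRegular_singleton_iff] at h
  refine ⟨h.1, fun a ha => ?_⟩
  have hI : (Ideal.ofList (List.ofFn fun i => v i.castSucc) • ⊤ : Ideal A) =
      Ideal.span (Set.range (Fin.init v)) := by
    rw [Ideal.smul_eq_mul, Ideal.mul_top, Ideal.ofList_ofFn]
    rfl
  have := @h.2 (Submodule.Quotient.mk a) 0 (by
    beta_reduce
    rw [smul_zero, ← Submodule.Quotient.mk_smul, Submodule.Quotient.mk_eq_zero]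
    exact hI ▸ ha)
  rwa [Submodule.Quotient.mk_eq_zero, hI] at this

theorem mem_span_of_sum_mul_eq_zero {n : ℕ} {v : Fin n → A}
    (hv : IsWeaklyRegular A (List.ofFn v)) {u : Fin n → A} (hu : ∑ i, u i * v i = 0)
    (i : Fin n) : u i ∈ Ideal.span (Set.range v) := by
  induction n with
  | zero => exact i.elim0
  | succ n ih =>
    obtain ⟨hinit, hlast⟩ := hv.of_ofFn_succ
    rw [Fin.sum_univ_castSucc] at hu
    have hinit_le : Ideal.span (Set.range (Fin.init v)) ≤ Ideal.span (Set.range v) :=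
      Ideal.span_mono (Set.range_comp_subset_range _ _)
    have hu_last : u (Fin.last n) ∈ Ideal.span (Set.range (Fin.init v)) := by
      refine hlast _ ?_
      rw [mul_comm, eq_neg_of_add_eq_zero_right hu]
      exact neg_mem (Ideal.sum_mem _ fun j _ => Ideal.mul_mem_left _ _ (Ideal.subset_span ⟨j, rfl⟩))
    obtain ⟨d, hd⟩ := Ideal.mem_span_range_iff_exists_fun.mp hu_last
    -- since `u last = ∑ d j * v j`, moving `u last * v last` onto the earlier terms
    -- leaves a relation on `Fin.init v`
    have hrel : ∑ j, (u j.castSucc + d j * v (Fin.last n)) * Fin.init v j = 0 := by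
      calc ∑ j, (u j.castSucc + d j * v (Fin.last n)) * Fin.init v j
          = ∑ j : Fin n, u j.castSucc * v j.castSucc
              + (∑ j, d j * Fin.init v j) * v (Fin.last n) := by
            rw [Finset.sum_mul, ← Finset.sum_add_distrib]
            exact Finset.sum_congr rfl fun j _ => by simp only [Fin.init]; ring
        _ = 0 := by rw [hd]; exact hu
    refine Fin.lastCases (hinit_le hu_last) (fun j => ?_) i
    simpa using sub_mem (hinit_le (ih hinit hrel j))
      (Ideal.mul_mem_left _ (d j) (Ideal.subset_span ⟨Fin.last n, rfl⟩))

theorem mem_of_sum_mul_mem_mul {n : ℕ} {v : Fin n → A} (hv : IsWeaklyRegular A (List.ofFn v))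
    {J : Ideal A} (hvJ : Ideal.span (Set.range v) ≤ J) {u : Fin n → A}
    (hu : ∑ i, u i * v i ∈ J * Ideal.span (Set.range v)) (i : Fin n) : u i ∈ J := by
  obtain ⟨d, hdJ, hd⟩ := (Submodule.mem_ideal_smul_span_iff_exists_sum J v _).mp hu
  rw [Finsupp.sum_fintype _ _ fun i => zero_smul A (v i)] at hd
  have hrel : ∑ i, (u i - d i) * v i = 0 := by
    simp only [smul_eq_mul] at hd
    simp only [sub_mul, Finset.sum_sub_distrib, hd, sub_self]
  simpa using add_mem (hvJ (mem_span_of_sum_mul_eq_zero hv hrel i)) (hdJ i)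

end RingTheory.Sequence.IsWeaklyRegular

end RegularSequence

section Radical

variable {A : Type*} [CommRing A]

theorem ringKrullDim_quotient_eq_of_radical_eq {I J : Ideal A} (h : I.radical = J.radical) :
    ringKrullDim (A ⧸ I) = ringKrullDim (A ⧸ J) := by
  rw [ringKrullDim_quotient, ringKrullDim_quotient, ← PrimeSpectrum.zeroLocus_radical I, h,
    PrimeSpectrum.zeroLocus_radical]

theorem Ideal.radical_span_range_pow {ι : Type*} (x : ι → A) {k : ℕ} (hk : 0 < k) :
    (Ideal.span (Set.range fun i => x i ^ k)).radical = (Ideal.span (Set.range x)).radical := by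
  refine le_antisymm (Ideal.radical_mono (Ideal.span_le.mpr ?_))
    (Ideal.radical_le_radical_iff.mpr (Ideal.span_le.mpr ?_))
  · rintro _ ⟨i, rfl⟩
    exact Ideal.pow_mem_of_mem _ (Ideal.subset_span (Set.mem_range_self i)) k hk
  · rintro _ ⟨i, rfl⟩
    exact Ideal.mem_radical_iff.mpr ⟨k, Ideal.subset_span ⟨i, rfl⟩⟩

end Radical

section SystemOfParameters

variable {A : Type u} [CommRing A] [IsLocalRing A]

theorem IsSOP.pow {t : ℕ} {x : Fin t → A} (hx : IsSOP A x) {k : ℕ} (hk : 0 < k) :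
    IsSOP A fun i => x i ^ k := by
  refine ⟨fun i => Ideal.pow_mem_of_mem _ (hx.1 i) k hk, ?_⟩
  rw [ringKrullDim_quotient_eq_of_radical_eq (Ideal.radical_span_range_pow x hk)]
  exact hx.2

variable [IsNoetherianRing A]

theorem IsLocalRing.exists_isFullSOP :
    ∃ (n : ℕ) (z : Fin n → A),
      IsFullSOP A z ∧ ringKrullDim (A ⧸ Ideal.span (Set.range z)) = 0 := by
  obtain ⟨s, hs, hcard⟩ := (maximalIdeal A).exists_finset_card_eq_height_of_isNoetherianRing
  have hrange : Set.range (fun i => (s.equivFin.symm i : A)) = s :=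
    (s.equivFin.symm.surjective.range_comp Subtype.val).trans Subtype.range_coe
  have := IsLocalRing.quotient_artinian_of_mem_minimalPrimes_of_isLocalRing _ hs
  have : Nontrivial (A ⧸ Ideal.span (s : Set A)) := Ideal.Quotient.nontrivial_iff.mpr
    (ne_top_of_le_ne_top (maximalIdeal.isMaximal A).ne_top hs.1.2)
  have h0 : ringKrullDim (A ⧸ Ideal.span (Set.range fun i => (s.equivFin.symm i : A))) = 0 := by
    rw [hrange]
    exact ringKrullDimZero_iff_ringKrullDim_eq_zero.mp inferInstance
  have hdim : (s.card : WithBot ℕ∞) = ringKrullDim A := by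
    rw [← IsLocalRing.maximalIdeal_height_eq_ringKrullDim, ← hcard]
    rfl
  refine ⟨s.card, fun i => s.equivFin.symm i, ⟨⟨fun i => hs.1.2 ?_, ?_⟩, hdim⟩, h0⟩
  · exact Ideal.subset_span (s.equivFin.symm i).2
  · rw [h0, zero_add, hdim]

theorem IsSOP.exists_isFullSOP_append {t : ℕ} {x : Fin t → A} (hx : IsSOP A x) :
    ∃ (n : ℕ) (z : Fin n → A), IsFullSOP A (Fin.append x z) := by
  set I := Ideal.span (Set.range x)
  have hI : I ≤ maximalIdeal A := Ideal.span_le.mpr (Set.range_subset_iff.mpr hx.1)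
  have : Nontrivial (A ⧸ I) := Ideal.Quotient.nontrivial_iff.mpr
    (ne_top_of_le_ne_top (maximalIdeal.isMaximal A).ne_top hI)
  have : IsLocalRing (A ⧸ I) := .of_surjective' _ Ideal.Quotient.mk_surjective
  obtain ⟨n, w, ⟨⟨hwm, -⟩, hn⟩, hw0⟩ := IsLocalRing.exists_isFullSOP (A := A ⧸ I)
  choose z hz using fun i => Ideal.Quotient.mk_surjective (w i)
  have hzm : Ideal.span (Set.range z) ≤ maximalIdeal A := by
    refine Ideal.span_le.mpr (Set.range_subset_iff.mpr fun i => ?_)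
    by_contra h
    exact (IsLocalRing.mem_maximalIdeal _).mp (hwm i)
      (hz i ▸ (IsLocalRing.notMem_maximalIdeal.mp h).map _)
  have hspan : Ideal.span (Set.range (Fin.append x z)) = I ⊔ Ideal.span (Set.range z) := by
    rw [← Ideal.span_union]
    congr 1
    ext a
    simp only [← List.mem_ofFn', List.ofFn_fin_append, List.mem_append, Set.mem_union]
  have h0 : ringKrullDim (A ⧸ Ideal.span (Set.range (Fin.append x z))) = 0 := by
    rw [hspan, ← ringKrullDim_eq_of_ringEquiv (DoubleQuot.quotQuotEquivQuotSup I _),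
      Ideal.map_span, ← Set.range_comp]
    rwa [show Ideal.Quotient.mk I ∘ z = w from funext hz]
  have hdim : ((t + n : ℕ) : WithBot ℕ∞) = ringKrullDim A := by
    rw [← hx.2, ← hn, add_comm]
    norm_cast
  refine ⟨n, z, ⟨fun k => sup_le hI hzm (hspan ▸ Ideal.subset_span ⟨k, rfl⟩), ?_⟩, hdim⟩
  rw [h0, zero_add, hdim]

theorem IsCMLocal.isWeaklyRegular_ofFn (hA : IsCMLocal A) {t : ℕ} {x : Fin t → A}
    (hx : IsSOP A x) : RingTheory.Sequence.IsWeaklyRegular A (List.ofFn x) := by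
  obtain ⟨n, z, hxz⟩ := hx.exists_isFullSOP_append
  exact (hA _ _ hxz).toIsWeaklyRegular.of_ofFn_append

end SystemOfParameters

theorem mul_pow_mem_fpow_of_mem_fpow_span_mul {A : Type*} [CommRing A] {p : ℕ} [ExpChar A p]
    {t e : ℕ} {x : Fin t → A}
    (hreg : RingTheory.Sequence.IsWeaklyRegular A (List.ofFn fun i => x i ^ p ^ e))
    {J : Ideal A} (hxJ : Ideal.span (Set.range x) ≤ J) {a : Fin t → A} {c : A}
    (h : c * (∑ i, a i * x i) ^ p ^ e ∈ fpow A (Ideal.span (Set.range x) * J) (p ^ e))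
    (i : Fin t) : c * a i ^ p ^ e ∈ fpow A J (p ^ e) := by
  have hspan : Ideal.span (Set.range fun i => x i ^ p ^ e) =
      fpow A (Ideal.span (Set.range x)) (p ^ e) := by
    rw [fpow_span, ← Set.range_comp]
    rfl
  refine hreg.mem_of_sum_mul_mem_mul (hspan ▸ fpow_mono hxJ _) (u := fun i => c * a i ^ p ^ e) ?_ i
  have hsum : ∑ i, c * a i ^ p ^ e * x i ^ p ^ e = c * (∑ i, a i * x i) ^ p ^ e := by
    simp only [sum_pow_char_pow, Finset.mul_sum, mul_pow, mul_assoc]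
  rw [hsum, hspan, mul_comm (fpow A J (p ^ e))]
  exact fpow_mul_le _ _ e h

/-- In an F-rational Cohen–Macaulay Noetherian local ring, if
`q₁ ⊆ q₂` are ideals each generated by a system of parameters of the same length, then
`(q₁q₂)^* = q₁q₂`. -/
theorem statement_11 (R : Type u) [CommRing R] [IsLocalRing R] [IsNoetherianRing R]
    (p : ℕ) [Fact p.Prime] [CharP R p]
    (hFR : FRational R p) (hCM : IsCMLocal R)
    (t : ℕ) (x y : Fin t → R) (hx : IsSOP R x) (hy : IsSOP R y)
    (q₁ q₂ : Ideal R) (hq₁ : q₁ = Ideal.span (Set.range x))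
    (hq₂ : q₂ = Ideal.span (Set.range y)) (hle : q₁ ≤ q₂) :
    tcl R p (q₁ * q₂) = q₁ * q₂ := by
  have : ExpChar R p := ExpChar.prime Fact.out
  subst hq₁ hq₂
  refine le_antisymm (Ideal.span_le.mpr ?_) (le_tcl R p _)
  rintro α ⟨c, hc, N, hN⟩
  have hα : α ∈ Ideal.span (Set.range x) := by
    rw [← hFR _ ⟨t, x, hx, rfl⟩]
    exact tcl_mono Ideal.mul_le_left (Ideal.subset_span ⟨c, hc, N, hN⟩)
  obtain ⟨a, rfl⟩ := Ideal.mem_span_range_iff_exists_fun.mp hα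
  have ha : ∀ i, a i ∈ Ideal.span (Set.range y) := fun i => by
    rw [← hFR _ ⟨t, y, hy, rfl⟩]
    refine Ideal.subset_span ⟨c, hc, N, fun e he => ?_⟩
    have hreg := hCM.isWeaklyRegular_ofFn (hx.pow (pow_pos (expChar_pos R p) e))
    exact mul_pow_mem_fpow_of_mem_fpow_span_mul hreg hle (hN e he) i
  refine Ideal.sum_mem _ fun i _ => ?_
  rw [mul_comm (a i)]
  exact Ideal.mul_mem_mul (Ideal.subset_span ⟨i, rfl⟩) (ha i)
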